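/- arXiv:2103.16275 — 9 statements merged into one kernel-verified Lean document; each statement's English description precedes it below -/
import Mathlib

section
/- For all α, β ∈ ℂ, the inner product of two coherent states satisfies ⟪coh α, coh β⟫ = exp(−(|α|² + |β|²)/2 + conj(α)·β). -/
/-! Termwise, `conj (coh α)ₙ · (coh β)ₙ = e^{-(|α|² + |β|²)/2} (ᾱβ)ⁿ / n!`: the two `1/√n!`
factors combine into `1/n!`, so the inner product is the Gaussian prefactor times the
exponential series of `ᾱβ`. -/

open scoped ComplexConjugate ENNReal

/-- The components of the coherent state `|α⟩`: `exp(−|α|²/2)·αⁿ/√(n!)`. -/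
noncomputable def cohFun (α : ℂ) : ℕ → ℂ := fun n =>
  (Real.exp (-‖α‖ ^ 2 / 2) / Real.sqrt (Nat.factorial n) : ℝ) * α ^ n

lemma cohFun_memℓp (α : ℂ) : Memℓp (cohFun α) 2 := by
  apply memℓp_gen
  have h : Summable (fun n : ℕ =>
      Real.exp (-‖α‖ ^ 2 / 2) ^ 2 * ((‖α‖ ^ 2) ^ n / (Nat.factorial n))) :=
    (Real.summable_pow_div_factorial (‖α‖ ^ 2)).mul_left _
  refine h.congr fun n => ?_
  have h2 : ((2 : ℝ≥0∞).toReal) = (2 : ℝ) := by norm_num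
  rw [h2, Real.rpow_two]
  have hn : ‖cohFun α n‖ = Real.exp (-‖α‖ ^ 2 / 2) / Real.sqrt (Nat.factorial n) * ‖α‖ ^ n := by
    simp only [cohFun, norm_mul, norm_pow, Complex.norm_real, Real.norm_eq_abs]
    rw [abs_of_pos (by positivity)]
  rw [hn, mul_pow, div_pow, Real.sq_sqrt (by positivity), pow_right_comm]
  ring

/-- The coherent state `|α⟩` as an element of `ℓ²(ℕ, ℂ)`. -/
noncomputable def coh (α : ℂ) : lp (fun _ : ℕ => ℂ) 2 := ⟨cohFun α, cohFun_memℓp α⟩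

open Nat in
lemma cohFun_apply (α : ℂ) (n : ℕ) :
    cohFun α n = Complex.exp (-(‖α‖ ^ 2 : ℝ) / 2) * α ^ n / (√(n ! : ℝ) : ℂ) := by
  simp only [cohFun, Complex.ofReal_div, Complex.ofReal_exp]
  push_cast
  ring

open Nat in
lemma conj_cohFun_mul_cohFun (α β : ℂ) (n : ℕ) :
    conj (cohFun α n) * cohFun β n
      = Complex.exp (-(((‖α‖ ^ 2 + ‖β‖ ^ 2 : ℝ)) : ℂ) / 2) * ((conj α * β) ^ n / n !) := by
  have hsqrt : (√(n ! : ℝ) : ℂ) * √(n ! : ℝ) = n ! := by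
    exact_mod_cast Real.mul_self_sqrt (Nat.cast_nonneg _)
  have hfac : (√(n ! : ℝ) : ℂ) ≠ 0 := by
    exact_mod_cast (Real.sqrt_pos.mpr (Nat.cast_pos.mpr (Nat.factorial_pos n))).ne'
  have hexp : Complex.exp (-(((‖α‖ ^ 2 + ‖β‖ ^ 2 : ℝ)) : ℂ) / 2)
      = Complex.exp (-(‖α‖ ^ 2 : ℝ) / 2) * Complex.exp (-(‖β‖ ^ 2 : ℝ) / 2) := by
    rw [← Complex.exp_add]; push_cast; ring_nf
  simp only [cohFun_apply, map_mul, map_div₀, map_pow, map_neg, map_ofNat, Complex.conj_ofReal,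
    ← Complex.exp_conj, hexp, ← hsqrt]
  field_simp
  ring

/-- inner product of two coherent states. -/
theorem inner_coh_coh (α β : ℂ) :
    inner (𝕜 := ℂ) (coh α) (coh β)
      = Complex.exp (-(((‖α‖ ^ 2 + ‖β‖ ^ 2 : ℝ)) : ℂ) / 2 + conj α * β) := by
  have hseries := (NormedSpace.expSeries_div_hasSum_exp (conj α * β)).mul_left
    (Complex.exp (-(((‖α‖ ^ 2 + ‖β‖ ^ 2 : ℝ)) : ℂ) / 2))
  rw [← Complex.exp_eq_exp_ℂ] at hseries
  rw [lp.inner_eq_tsum, Complex.exp_add, ← hseries.tsum_eq]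
  refine tsum_congr fun n => ?_
  rw [RCLike.inner_apply, mul_comm]
  exact conj_cohFun_mul_cohFun α β n
end

section
/- For every γ ∈ ℂ there exists a linear isometric equivalence D of ℓ²(ℕ, ℂ) onto itself (a displacement operator with parameter γ) such that D(coh β) = exp((γ·conj(β) − conj(γ)·β)/2) • coh(γ + β) for every β ∈ ℂ. -/
open scoped ComplexConjugate ENNReal

/-!
The displaced coherent states `e^{(γβ̄ - γ̄β)/2} |γ + β⟩` have the same Gram matrix as the
coherent states `|β⟩`: the phases cancel exactly the cross terms of
`⟪|α⟩, |β⟩⟫ = exp(ᾱβ - |α|²/2 - |β|²/2)`. Both families are total in `ℓ²`, since a vector `x`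
orthogonal to every `|z̄⟩` makes the entire function `∑ xₙ zⁿ / √n!` vanish identically. So
`|β⟩ ↦ e^{(γβ̄ - γ̄β)/2} |γ + β⟩` extends from the span of the coherent states to a surjective
linear isometry.
-/

open scoped InnerProductSpace

section

variable {𝕜 E F ι : Type*} [RCLike 𝕜] [NormedAddCommGroup E] [InnerProductSpace 𝕜 E]
  [NormedAddCommGroup F] [InnerProductSpace 𝕜 F] {v : ι → E} {w : ι → F}

open Finsupp in
theorem norm_linearCombination_eq_of_inner_eq (h : ∀ i j, ⟪w i, w j⟫_𝕜 = ⟪v i, v j⟫_𝕜)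
    (f : ι →₀ 𝕜) : ‖linearCombination 𝕜 w f‖ = ‖linearCombination 𝕜 v f‖ := by
  have : ⟪linearCombination 𝕜 w f, linearCombination 𝕜 w f⟫_𝕜
      = ⟪linearCombination 𝕜 v f, linearCombination 𝕜 v f⟫_𝕜 := by
    simp only [linearCombination_apply, Finsupp.sum, sum_inner, inner_sum, inner_smul_left,
      inner_smul_right, h]
  rw [norm_eq_sqrt_re_inner (𝕜 := 𝕜), norm_eq_sqrt_re_inner (𝕜 := 𝕜), this]

theorem exists_linearIsometry_apply_eq_of_inner_eq [CompleteSpace F]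
    (hv : (Submodule.span 𝕜 (Set.range v)).topologicalClosure = ⊤)
    (h : ∀ i j, ⟪w i, w j⟫_𝕜 = ⟪v i, v j⟫_𝕜) :
    ∃ D : E →ₗᵢ[𝕜] F, ∀ i, D (v i) = w i := by
  set V := Finsupp.linearCombination 𝕜 v
  set W := Finsupp.linearCombination 𝕜 w
  have hdense : DenseRange V := by
    rwa [DenseRange, ← LinearMap.coe_range, Finsupp.range_linearCombination,
      Submodule.dense_iff_topologicalClosure_eq_top]
  have hbound : ∃ C, ∀ f, ‖W f‖ ≤ C * ‖V f‖ :=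
    ⟨1, fun f => by rw [one_mul, norm_linearCombination_eq_of_inner_eq h]⟩
  set D := W.extendOfNorm V
  have hDV : ∀ f, D (V f) = W f := LinearMap.extendOfNorm_eq hdense hbound
  have hnorm : ∀ x, ‖D x‖ = ‖x‖ := by
    refine hdense.induction ?_ (isClosed_eq (by fun_prop) continuous_norm)
    rintro _ ⟨f, rfl⟩
    rw [hDV, norm_linearCombination_eq_of_inner_eq h]
  refine ⟨⟨D.toLinearMap, hnorm⟩, fun i => ?_⟩
  simpa [V, W] using hDV (Finsupp.single i 1)

theorem LinearIsometry.surjective_of_denseRange [CompleteSpace E] (D : E →ₗᵢ[𝕜] F)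
    (hD : DenseRange D) : Function.Surjective D := by
  rw [← Set.range_eq_univ, ← D.isometry.isClosedEmbedding.isClosed_range.closure_eq,
    hD.closure_range]

theorem exists_linearIsometryEquiv_apply_eq_of_inner_eq [CompleteSpace E] [CompleteSpace F]
    (hv : (Submodule.span 𝕜 (Set.range v)).topologicalClosure = ⊤)
    (hw : (Submodule.span 𝕜 (Set.range w)).topologicalClosure = ⊤)
    (h : ∀ i j, ⟪w i, w j⟫_𝕜 = ⟪v i, v j⟫_𝕜) :
    ∃ D : E ≃ₗᵢ[𝕜] F, ∀ i, D (v i) = w i := by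
  obtain ⟨D, hD⟩ := exists_linearIsometry_apply_eq_of_inner_eq hv h
  have hspan : Submodule.span 𝕜 (Set.range w) ≤ LinearMap.range D.toLinearMap :=
    Submodule.span_le.mpr <| by rintro _ ⟨i, rfl⟩; exact ⟨v i, hD i⟩
  have hdense : DenseRange D :=
    (Submodule.dense_iff_topologicalClosure_eq_top.mpr hw).mono hspan
  exact ⟨LinearIsometryEquiv.ofSurjective D (D.surjective_of_denseRange hdense), hD⟩

end

theorem eq_zero_of_forall_hasSum_mul_pow_zero {𝕜 : Type*} [RCLike 𝕜] {a : ℕ → 𝕜}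
    (h : ∀ z, HasSum (fun n => a n * z ^ n) 0) : a = 0 := by
  set p := FormalMultilinearSeries.ofScalars 𝕜 a
  have hp : ∀ z, HasSum (fun n => p n fun _ => z) 0 := fun z => by
    simpa [p, FormalMultilinearSeries.ofScalars_apply_eq, mul_comm] using h z
  have hradius : p.radius = ⊤ := by
    refine ENNReal.eq_top_of_forall_nnreal_le fun r => p.le_radius_of_tendsto (l := 0) ?_
    simpa [p, FormalMultilinearSeries.ofScalars_norm] using
      (h ((r : ℝ) : 𝕜)).summable.tendsto_atTop_zero.norm
  have hsum : p.sum = 0 := funext fun z => (hp z).tsum_eq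
  have := (p.hasFPowerSeriesOnBall (hradius ▸ ENNReal.zero_lt_top)).hasFPowerSeriesAt (x := 0)
  rw [hsum] at this
  exact (FormalMultilinearSeries.ofScalars_series_eq_zero 𝕜 (c := a)).mp this.eq_zero

theorem inner_coh (α β : ℂ) :
    ⟪coh α, coh β⟫_ℂ = Complex.exp (conj α * β - (conj α * α + conj β * β) / 2) := by
  have hterm : ∀ n, ⟪coh α n, coh β n⟫_ℂ =
      Complex.exp (-(conj α * α + conj β * β) / 2) * ((conj α * β) ^ n / n.factorial) := by
    intro n
    have hsqrt : ((√(n.factorial : ℝ) : ℝ) : ℂ) * (√(n.factorial : ℝ) : ℝ) = n.factorial := by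
      rw [← Complex.ofReal_mul, Real.mul_self_sqrt (Nat.cast_nonneg _), Complex.ofReal_natCast]
    have hnorm : ∀ z : ℂ, ((‖z‖ ^ 2 : ℝ) : ℂ) = conj z * z := fun z => by
      rw [mul_comm, RCLike.mul_conj]; norm_cast
    have hs : ((√(n.factorial : ℝ) : ℝ) : ℂ) ≠ 0 := by norm_cast; positivity
    rw [← hnorm, ← hnorm, ← hsqrt, neg_add, add_div, Complex.exp_add, ← Complex.ofReal_ofNat,
      ← Complex.ofReal_neg, ← Complex.ofReal_div, ← Complex.ofReal_neg, ← Complex.ofReal_div,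
      ← Complex.ofReal_exp, ← Complex.ofReal_exp]
    simp only [RCLike.inner_apply, coh, cohFun, map_mul, map_pow, Complex.conj_ofReal,
      Complex.ofReal_div, map_div₀]
    field_simp
    ring
  have hexp : HasSum (fun n => (conj α * β) ^ n / n.factorial) (Complex.exp (conj α * β)) :=
    Complex.exp_eq_exp_ℂ ▸ NormedSpace.expSeries_div_hasSum_exp _
  have := hexp.mul_left (Complex.exp (-(conj α * α + conj β * β) / 2))
  rw [(lp.hasSum_inner _ _).unique ((funext hterm).symm ▸ this), ← Complex.exp_add]
  ring_nf

theorem topologicalClosure_span_range_coh :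
    (Submodule.span ℂ (Set.range coh)).topologicalClosure = ⊤ := by
  rw [Submodule.topologicalClosure_eq_top_iff, Submodule.eq_bot_iff]
  intro x hx
  have horth : ∀ α, ⟪coh α, x⟫_ℂ = 0 := fun α =>
    (Submodule.mem_orthogonal _ x).mp hx _ (Submodule.subset_span ⟨α, rfl⟩)
  set a : ℕ → ℂ := fun n => x n / √(n.factorial : ℝ)
  have hsum : ∀ z, HasSum (fun n => a n * z ^ n) 0 := by
    intro z
    have hterm : ∀ n, ⟪coh (conj z) n, x n⟫_ℂ = Real.exp (-‖z‖ ^ 2 / 2) * (a n * z ^ n) := by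
      intro n
      simp only [RCLike.inner_apply, coh, cohFun, a, map_mul, map_pow, map_div₀,
        Complex.conj_ofReal, Complex.conj_conj, Complex.norm_conj, Complex.ofReal_div]
      ring
    have := horth (conj z) ▸ lp.hasSum_inner (coh (conj z)) x
    rw [funext hterm, ← mul_zero ((Real.exp (-‖z‖ ^ 2 / 2) : ℝ) : ℂ)] at this
    exact (hasSum_mul_left_iff (by exact_mod_cast (Real.exp_pos _).ne')).mp this
  have ha := eq_zero_of_forall_hasSum_mul_pow_zero hsum
  ext n
  have hs : ((√(n.factorial : ℝ) : ℝ) : ℂ) ≠ 0 := by norm_cast; positivity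
  simpa [a, hs] using congr_fun ha n

noncomputable def displacedCoh (γ β : ℂ) : lp (fun _ : ℕ => ℂ) 2 :=
  Complex.exp ((γ * conj β - conj γ * β) / 2) • coh (γ + β)

theorem inner_displacedCoh (γ α β : ℂ) :
    ⟪displacedCoh γ α, displacedCoh γ β⟫_ℂ = ⟪coh α, coh β⟫_ℂ := by
  rw [displacedCoh, displacedCoh, inner_smul_left, inner_smul_right, inner_coh, inner_coh,
    ← Complex.exp_conj, ← Complex.exp_add, ← Complex.exp_add]
  congr 1
  simp only [map_add, map_mul, map_sub, map_div₀, Complex.conj_conj, map_ofNat]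
  ring

theorem span_range_displacedCoh (γ : ℂ) :
    Submodule.span ℂ (Set.range (displacedCoh γ)) = Submodule.span ℂ (Set.range coh) := by
  apply le_antisymm <;> rw [Submodule.span_le] <;> rintro _ ⟨β, rfl⟩
  · exact Submodule.smul_mem _ _ (Submodule.subset_span ⟨γ + β, rfl⟩)
  · have hβ : coh β = (Complex.exp ((γ * conj (β - γ) - conj γ * (β - γ)) / 2))⁻¹ •
        displacedCoh γ (β - γ) := by
      rw [displacedCoh, inv_smul_smul₀ (Complex.exp_ne_zero _), add_sub_cancel]
    rw [SetLike.mem_coe, hβ]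
    exact Submodule.smul_mem _ _ (Submodule.subset_span ⟨β - γ, rfl⟩)

/-- existence of the displacement operator with parameter `γ`. -/
theorem exists_displacement_operator (γ : ℂ) :
    ∃ D : lp (fun _ : ℕ => ℂ) 2 ≃ₗᵢ[ℂ] lp (fun _ : ℕ => ℂ) 2,
      ∀ β : ℂ, D (coh β)
        = Complex.exp ((γ * conj β - conj γ * β) / 2) • coh (γ + β) :=
  exists_linearIsometryEquiv_apply_eq_of_inner_eq topologicalClosure_span_range_coh
    (span_range_displacedCoh γ ▸ topologicalClosure_span_range_coh) (inner_displacedCoh γ)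
end

section
/- Let α₁, α₂, β₁, β₂ ∈ ℂ and let 𝔻 be a two-mode displacement operator with parameters (−β₁, −α₂). Then 𝔻(coh α₁ ⊠ coh α₂ + coh β₁ ⊠ coh β₂) = exp(i·Im(α₁·conj(β₁))) • (coh(α₁−β₁) ⊠ coh 0) + exp(−i·Im(α₂·conj(β₂))) • (coh 0 ⊠ coh(β₂−α₂)). In particular, if Im(α₁·conj(β₁)) + Im(α₂·conj(β₂)) = 2nπ for some integer n, then 𝔻(coh α₁ ⊠ coh α₂ + coh β₁ ⊠ coh β₂) = exp(i·Im(α₁·conj(β₁))) • (coh(α₁−β₁) ⊠ coh 0 + coh 0 ⊠ coh(β₂−α₂)), so the state coh α₁ ⊠ coh α₂ + coh β₁ ⊠ coh β₂ is locally equivalent to an entangled coherent state. -/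
open scoped ComplexConjugate ENNReal

/-- The product state `ψ ⊠ χ` in the two-mode space `ℓ²(ℕ×ℕ, ℂ)`,
with components `(ψ ⊠ χ)(n, m) = ψ n · χ m`. -/
noncomputable def tmul (ψ χ : lp (fun _ : ℕ => ℂ) 2) : lp (fun _ : ℕ × ℕ => ℂ) 2 :=
  ⟨fun q => ψ q.1 * χ q.2, by
    apply memℓp_gen
    have hψ := (lp.memℓp ψ).summable (p := 2) (by norm_num)
    have hχ := (lp.memℓp χ).summable (p := 2) (by norm_num)
    refine (hψ.mul_of_nonneg hχ (fun n => Real.rpow_nonneg (norm_nonneg _) _)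
      (fun n => Real.rpow_nonneg (norm_nonneg _) _)).congr fun q => ?_
    rw [norm_mul, Real.mul_rpow (norm_nonneg _) (norm_nonneg _)]⟩

/-- A two-mode displacement operator with parameters `(γ, δ)`: a linear isometric
equivalence of `ℓ²(ℕ×ℕ, ℂ)` acting on product coherent states in the prescribed way. -/
def IsTwoModeDisplacement
    (𝔻 : lp (fun _ : ℕ × ℕ => ℂ) 2 ≃ₗᵢ[ℂ] lp (fun _ : ℕ × ℕ => ℂ) 2) (γ δ : ℂ) : Prop :=
  ∀ β β' : ℂ, 𝔻 (tmul (coh β) (coh β')) =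
    Complex.exp ((γ * conj β - conj γ * β) / 2 + (δ * conj β' - conj δ * β') / 2) •
      tmul (coh (γ + β)) (coh (δ + β'))

-- The exponent is `(z - z̄) / 2 = i Im z` for `z = β γ̄`.
lemma neg_displacement_exponent (γ β : ℂ) :
    (-γ * conj β - conj (-γ) * β) / 2 = Complex.I * ((β * conj γ).im : ℂ) := by
  have h := Complex.sub_conj (β * conj γ)
  simp only [map_mul, map_neg, Complex.conj_conj] at h ⊢
  push_cast at h
  linear_combination h / 2

lemma IsTwoModeDisplacement.apply_tmul_coh
    {𝔻 : lp (fun _ : ℕ × ℕ => ℂ) 2 ≃ₗᵢ[ℂ] lp (fun _ : ℕ × ℕ => ℂ) 2} {γ δ : ℂ}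
    (h𝔻 : IsTwoModeDisplacement 𝔻 (-γ) (-δ)) (β β' : ℂ) :
    𝔻 (tmul (coh β) (coh β')) =
      Complex.exp (Complex.I * ((β * conj γ).im : ℂ) + Complex.I * ((β' * conj δ).im : ℂ)) •
        tmul (coh (β - γ)) (coh (β' - δ)) := by
  rw [h𝔻 β β', neg_displacement_exponent, neg_displacement_exponent, neg_add_eq_sub,
    neg_add_eq_sub]

lemma Complex.im_mul_conj_self (z : ℂ) : (z * conj z).im = 0 := by
  rw [Complex.mul_conj, Complex.ofReal_im]

lemma Complex.im_mul_conj_swap (z w : ℂ) : (w * conj z).im = -(z * conj w).im := by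
  simp only [Complex.mul_im, Complex.conj_re, Complex.conj_im]
  ring

lemma Complex.exp_neg_I_mul_eq_exp_I_mul {a b : ℝ} {n : ℤ} (h : a + b = 2 * n * Real.pi) :
    Complex.exp (-(Complex.I * b)) = Complex.exp (Complex.I * a) := by
  refine Complex.exp_eq_exp_iff_exists_int.mpr ⟨-n, ?_⟩
  have h' : (a : ℂ) + b = 2 * n * Real.pi := by exact_mod_cast h
  push_cast
  linear_combination -Complex.I * h'

/-- local equivalence of `coh α₁ ⊠ coh α₂ + coh β₁ ⊠ coh β₂` to an
entangled coherent state, via the two-mode displacement with parameters `(−β₁, −α₂)`. -/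
theorem displaced_general_ecs (α₁ α₂ β₁ β₂ : ℂ)
    (𝔻 : lp (fun _ : ℕ × ℕ => ℂ) 2 ≃ₗᵢ[ℂ] lp (fun _ : ℕ × ℕ => ℂ) 2)
    (h𝔻 : IsTwoModeDisplacement 𝔻 (-β₁) (-α₂)) :
    𝔻 (tmul (coh α₁) (coh α₂) + tmul (coh β₁) (coh β₂))
      = Complex.exp (Complex.I * (((α₁ * conj β₁).im : ℝ) : ℂ)) • tmul (coh (α₁ - β₁)) (coh 0)
      + Complex.exp (-(Complex.I * (((α₂ * conj β₂).im : ℝ) : ℂ))) • tmul (coh 0) (coh (β₂ - α₂)) ∧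
    ((∃ n : ℤ, (α₁ * conj β₁).im + (α₂ * conj β₂).im = 2 * (n : ℝ) * Real.pi) →
      𝔻 (tmul (coh α₁) (coh α₂) + tmul (coh β₁) (coh β₂))
        = Complex.exp (Complex.I * (((α₁ * conj β₁).im : ℝ) : ℂ)) •
            (tmul (coh (α₁ - β₁)) (coh 0) + tmul (coh 0) (coh (β₂ - α₂)))) := by
  have hsum : 𝔻 (tmul (coh α₁) (coh α₂) + tmul (coh β₁) (coh β₂))
      = Complex.exp (Complex.I * (((α₁ * conj β₁).im : ℝ) : ℂ)) • tmul (coh (α₁ - β₁)) (coh 0)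
      + Complex.exp (-(Complex.I * (((α₂ * conj β₂).im : ℝ) : ℂ))) •
          tmul (coh 0) (coh (β₂ - α₂)) := by
    rw [map_add, h𝔻.apply_tmul_coh, h𝔻.apply_tmul_coh, sub_self, sub_self,
      Complex.im_mul_conj_self, Complex.im_mul_conj_self, Complex.im_mul_conj_swap α₂ β₂]
    simp only [Complex.ofReal_zero, Complex.ofReal_neg, mul_zero, add_zero, zero_add, mul_neg]
  refine ⟨hsum, ?_⟩
  rintro ⟨n, hn⟩
  rw [hsum, Complex.exp_neg_I_mul_eq_exp_I_mul hn, smul_add]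
end

section
/- Let m ≥ 1, let α, β : Fin m → ℂ, and let 𝔻 be an m-mode displacement operator with parameters (fun i => −β i). If Σ_i Im((α i)·conj(β i)) = 2nπ for some integer n, then 𝔻(Coh α + Coh β) = Coh(α − β) + Coh 0, i.e. the generalized GHZ-like state Coh α + Coh β is locally equivalent to the m-mode GHZ-like coherent state. -/
open scoped ComplexConjugate ENNReal

/-- Components of the `m`-mode product coherent state. -/
noncomputable def CohFun {m : ℕ} (γ : Fin m → ℂ) : (Fin m → ℕ) → ℂ :=
  fun k => ∏ i, cohFun (γ i) (k i)

lemma CohFun_summable : ∀ (m : ℕ) (γ : Fin m → ℂ),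
    Summable fun k : Fin m → ℕ => ∏ i, ‖cohFun (γ i) (k i)‖ ^ ((2 : ℝ≥0∞).toReal) := by
  intro m
  induction m with
  | zero =>
    intro γ
    haveI : Unique (Fin 0 → ℕ) := ⟨⟨fun i => i.elim0⟩, fun f => funext fun i => i.elim0⟩
    exact Summable.of_finite
  | succ m ih =>
    intro γ
    have h0 : Summable fun x : ℕ => ‖cohFun (γ 0) x‖ ^ ((2 : ℝ≥0∞).toReal) :=
      (cohFun_memℓp (γ 0)).summable (by norm_num)
    have hrest := ih (fun i => γ i.succ)
    have hprod := h0.mul_of_nonneg hrest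
      (fun x => Real.rpow_nonneg (norm_nonneg _) _)
      (fun k => Finset.prod_nonneg fun i _ => Real.rpow_nonneg (norm_nonneg _) _)
    refine (Fin.consEquiv fun _ : Fin (m + 1) => ℕ).summable_iff.1 (hprod.congr ?_)
    rintro ⟨x, k⟩
    show _ = ∏ i, ‖cohFun (γ i) (((Fin.consEquiv fun _ : Fin (m + 1) => ℕ) (x, k)) i)‖ ^
      ((2 : ℝ≥0∞).toReal)
    rw [Fin.prod_univ_succ]
    simp [Fin.consEquiv, Fin.cons_zero, Fin.cons_succ]

lemma CohFun_memℓp {m : ℕ} (γ : Fin m → ℂ) : Memℓp (CohFun γ) 2 := by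
  apply memℓp_gen
  refine (CohFun_summable m γ).congr fun k => ?_
  rw [CohFun, norm_prod, ← Real.finset_prod_rpow _ _ (fun i _ => norm_nonneg _)]

/-- The `m`-mode product coherent state `⊗ᵢ |γ i⟩` in `lp (fun _ : (Fin m → ℕ) => ℂ) 2`. -/
noncomputable def Coh {m : ℕ} (γ : Fin m → ℂ) : lp (fun _ : Fin m → ℕ => ℂ) 2 :=
  ⟨CohFun γ, CohFun_memℓp γ⟩

/-- An `m`-mode displacement operator with parameters `γ : Fin m → ℂ`. -/
def IsDisplacement {m : ℕ}
    (𝔻 : lp (fun _ : Fin m → ℕ => ℂ) 2 ≃ₗᵢ[ℂ] lp (fun _ : Fin m → ℕ => ℂ) 2)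
    (γ : Fin m → ℂ) : Prop :=
  ∀ β : Fin m → ℂ, 𝔻 (Coh β) =
    Complex.exp (∑ i, (γ i * conj (β i) - conj (γ i) * β i) / 2) • Coh (γ + β)

/-- local equivalence of the generalized GHZ-like state `Coh α + Coh β`
to the `m`-mode GHZ-like coherent state `Coh (α − β) + Coh 0`. -/
theorem displaced_generalized_ghz (m : ℕ) (hm : 1 ≤ m) (α β : Fin m → ℂ)
    (𝔻 : lp (fun _ : Fin m → ℕ => ℂ) 2 ≃ₗᵢ[ℂ] lp (fun _ : Fin m → ℕ => ℂ) 2)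
    (h𝔻 : IsDisplacement 𝔻 (fun i => -β i))
    (hphase : ∃ n : ℤ, (∑ i, (α i * conj (β i)).im) = 2 * (n : ℝ) * Real.pi) :
    𝔻 (Coh α + Coh β) = Coh (α - β) + Coh (0 : Fin m → ℂ) := by
  obtain ⟨n, hn⟩ := hphase
  rw [map_add, h𝔻 α, h𝔻 β]
  have h1 : (fun i => -β i) + α = α - β := by funext i; simp [sub_eq_neg_add]
  have h2 : (fun i => -β i) + β = 0 := by funext i; simp
  rw [h1, h2]
  have hβ : ∑ i, ((fun i => -β i) i * conj (β i) - conj ((fun i => -β i) i) * β i) / 2 = 0 := by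
    apply Finset.sum_eq_zero
    intro i _
    simp only [map_neg]
    ring
  have hα : ∑ i, ((fun i => -β i) i * conj (α i) - conj ((fun i => -β i) i) * α i) / 2
      = (n : ℤ) * (2 * Real.pi * Complex.I) := by
    have key : ∀ i, ((fun i => -β i) i * conj (α i) - conj ((fun i => -β i) i) * α i) / 2
        = (((α i * conj (β i)).im : ℝ) : ℂ) * Complex.I := by
      intro i
      have h := Complex.sub_conj (α i * conj (β i))
      rw [map_mul, Complex.conj_conj] at h
      simp only [map_neg]
      push_cast at h
      linear_combination h / 2
    rw [Finset.sum_congr rfl fun i _ => key i]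
    have hrhs : ((n : ℤ) : ℂ) * (2 * Real.pi * Complex.I)
        = ((∑ i, (α i * conj (β i)).im : ℝ) : ℂ) * Complex.I := by
      rw [hn]; push_cast; ring
    rw [hrhs]
    push_cast
    rw [← Finset.sum_mul]
  rw [hα, hβ, Complex.exp_zero, one_smul]
  rw [Complex.exp_int_mul_two_pi_mul_I, one_smul]
end

section
/- For all α, β ∈ ℂ, the unnormalized entangled coherent state ψ = coh α ⊠ coh 0 + coh 0 ⊠ coh β satisfies Ω₁ ψ = ψ and Ω₂ ψ = ψ, i.e. the target entangled coherent state passes the first two measurement settings of the verification protocol with probability 1. -/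
/-!
The vacuum `coh 0` is the sequence `δ₀`, so `ψ = coh α ⊠ coh 0 + coh 0 ⊠ coh β` has no component
with photons in both modes and `Ω₁` fixes it. Every partial inner product occurring in `Ω₂ ψ` is
linear in the product states, hence a combination of the overlaps `⟪coh γ, coh 0⟫` and norms
`⟪coh γ, coh γ⟫ = 1`; with the norms equal to one the overlaps cancel between the three terms of
`Ω₂` and what remains is `ψ`.
-/

open scoped ComplexConjugate ENNReal

open scoped InnerProductSpace

lemma tsum_conj_mul_add_eq_inner {ι : Type*} (x u u' : lp (fun _ : ι => ℂ) 2) (c c' : ℂ) :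
    ∑' k, conj (x k) * (c * u k + c' * u' k) = c * ⟪x, u⟫_ℂ + c' * ⟪x, u'⟫_ℂ := by
  rw [← inner_smul_right, ← inner_smul_right, ← inner_add_right, lp.inner_eq_tsum]
  refine tsum_congr fun k => ?_
  simp only [lp.coeFn_add, lp.coeFn_smul, Pi.add_apply, Pi.smul_apply, smul_eq_mul,
    RCLike.inner_apply]
  ring

section ProductStates

variable (x y u v u' v' : lp (fun _ : ℕ => ℂ) 2)

lemma tmul_add_tmul_apply (n m : ℕ) :
    (tmul u v + tmul u' v') (n, m) = u n * v m + u' n * v' m :=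
  rfl

lemma tsum_conj_mul_tmul_add_tmul_fst (m : ℕ) :
    ∑' k, conj (x k) * (tmul u v + tmul u' v') (k, m) = v m * ⟪x, u⟫_ℂ + v' m * ⟪x, u'⟫_ℂ := by
  simp_rw [tmul_add_tmul_apply, mul_comm (u _), mul_comm (u' _)]
  exact tsum_conj_mul_add_eq_inner x u u' _ _

lemma tsum_conj_mul_tmul_add_tmul_snd (n : ℕ) :
    ∑' k, conj (y k) * (tmul u v + tmul u' v') (n, k) = u n * ⟪y, v⟫_ℂ + u' n * ⟪y, v'⟫_ℂ := by
  simp_rw [tmul_add_tmul_apply]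
  exact tsum_conj_mul_add_eq_inner y v v' _ _

lemma tsum_tsum_conj_mul_conj_mul_tmul_add_tmul :
    ∑' k, ∑' l, conj (x k) * conj (y l) * (tmul u v + tmul u' v') (k, l)
      = ⟪y, v⟫_ℂ * ⟪x, u⟫_ℂ + ⟪y, v'⟫_ℂ * ⟪x, u'⟫_ℂ := by
  simp_rw [mul_assoc, tsum_mul_left, tsum_conj_mul_tmul_add_tmul_snd, mul_comm (u _),
    mul_comm (u' _)]
  exact tsum_conj_mul_add_eq_inner x u u' _ _

end ProductStates

lemma coh_zero_apply_of_ne_zero {k : ℕ} (hk : k ≠ 0) : coh 0 k = 0 := by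
  simp [coh, cohFun, hk]

lemma norm_cohFun_sq (γ : ℂ) (n : ℕ) :
    ‖cohFun γ n‖ ^ 2 = Real.exp (-‖γ‖ ^ 2) * ((‖γ‖ ^ 2) ^ n / n.factorial) := by
  have hexp : Real.exp (-‖γ‖ ^ 2) = Real.exp (-‖γ‖ ^ 2 / 2) ^ 2 := by
    rw [← Real.exp_nat_mul]; ring_nf
  simp only [cohFun, norm_mul, norm_pow, Complex.norm_real, Real.norm_eq_abs]
  rw [abs_of_pos (by positivity), mul_pow, div_pow, Real.sq_sqrt (by positivity), hexp,
    pow_right_comm]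
  ring

lemma coh_apply (γ : ℂ) (n : ℕ) : coh γ n = cohFun γ n :=
  rfl

lemma inner_coh_self (γ : ℂ) : ⟪coh γ, coh γ⟫_ℂ = 1 := by
  have hseries : ∑' n : ℕ, (‖γ‖ ^ 2) ^ n / (n.factorial : ℝ) = Real.exp (‖γ‖ ^ 2) := by
    rw [Real.exp_eq_exp_ℝ, NormedSpace.exp_eq_tsum_div]
  calc ⟪coh γ, coh γ⟫_ℂ = ∑' n, ((‖cohFun γ n‖ ^ 2 : ℝ) : ℂ) := by
        rw [lp.inner_eq_tsum]
        refine tsum_congr fun n => ?_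
        rw [RCLike.inner_apply, coh_apply, Complex.mul_conj', Complex.ofReal_pow]
    _ = ((∑' n : ℕ, Real.exp (-‖γ‖ ^ 2) * ((‖γ‖ ^ 2) ^ n / n.factorial) : ℝ) : ℂ) := by
        simp_rw [Complex.ofReal_tsum, norm_cohFun_sq]
    _ = 1 := by
        rw [tsum_mul_left, hseries, ← Real.exp_add, neg_add_cancel, Real.exp_zero,
          Complex.ofReal_one]

/-- the target entangled coherent state passes the first two measurement
settings `Ω₁` (projection onto states with no photons in at least one mode) and
`Ω₂ = I ⊗ P_β + P_α ⊗ I − P_α ⊗ P_β` with probability 1. -/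
theorem ecs_fixed_by_omega12 (α β : ℂ)
    (Ω₁ Ω₂ : lp (fun _ : ℕ × ℕ => ℂ) 2 →L[ℂ] lp (fun _ : ℕ × ℕ => ℂ) 2)
    (hΩ₁ : ∀ (φ : lp (fun _ : ℕ × ℕ => ℂ) 2) (n m : ℕ),
      (Ω₁ φ) (n, m) = if n = 0 ∨ m = 0 then φ (n, m) else 0)
    (hΩ₂ : ∀ (φ : lp (fun _ : ℕ × ℕ => ℂ) 2) (n m : ℕ),
      (Ω₂ φ) (n, m)
        = coh β m * (∑' k : ℕ, conj (coh β k) * φ (n, k))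
        + coh α n * (∑' k : ℕ, conj (coh α k) * φ (k, m))
        - coh α n * coh β m * (∑' k : ℕ, ∑' l : ℕ, conj (coh α k) * conj (coh β l) * φ (k, l))) :
    Ω₁ (tmul (coh α) (coh 0) + tmul (coh 0) (coh β))
      = tmul (coh α) (coh 0) + tmul (coh 0) (coh β) ∧
    Ω₂ (tmul (coh α) (coh 0) + tmul (coh 0) (coh β))
      = tmul (coh α) (coh 0) + tmul (coh 0) (coh β) := by
  constructor
  · ext ⟨n, m⟩
    rw [hΩ₁]
    split_ifs with h
    · rfl
    · obtain ⟨hn, hm⟩ := not_or.mp h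
      rw [tmul_add_tmul_apply, coh_zero_apply_of_ne_zero hn, coh_zero_apply_of_ne_zero hm]
      ring
  · ext ⟨n, m⟩
    rw [hΩ₂, tsum_conj_mul_tmul_add_tmul_snd, tsum_conj_mul_tmul_add_tmul_fst,
      tsum_tsum_conj_mul_conj_mul_tmul_add_tmul, inner_coh_self, inner_coh_self,
      tmul_add_tmul_apply]
    ring
end

section
/- Let α, β ∈ ℂ and let 𝔻 be a two-mode displacement operator with parameters (−α/2, −β/2). Then for all B, C ∈ ℂ, 𝔻⁻¹(P_even(𝔻(B • (coh α ⊠ coh 0) + C • (coh 0 ⊠ coh β)))) = ((B+C)/2) • (coh α ⊠ coh 0 + coh 0 ⊠ coh β). -/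
open scoped ComplexConjugate ENNReal

lemma cohFun_neg (a : ℂ) (n : ℕ) : cohFun (-a) n = (-1 : ℂ) ^ n * cohFun a n := by
  simp only [cohFun, norm_neg]
  rw [neg_pow]
  ring

lemma pev_tmul_coh
    (Pev : lp (fun _ : ℕ × ℕ => ℂ) 2 →L[ℂ] lp (fun _ : ℕ × ℕ => ℂ) 2)
    (hPev : ∀ (φ : lp (fun _ : ℕ × ℕ => ℂ) 2) (n m : ℕ),
      (Pev φ) (n, m) = if Even (n + m) then φ (n, m) else 0)
    (a b : ℂ) :
    Pev (tmul (coh a) (coh b)) =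
      (1/2 : ℂ) • (tmul (coh a) (coh b) + tmul (coh (-a)) (coh (-b))) := by
  apply lp.ext
  funext q
  obtain ⟨n, m⟩ := q
  have h1 : (tmul (coh (-a)) (coh (-b))) (n, m)
      = (-1 : ℂ) ^ (n + m) * (tmul (coh a) (coh b)) (n, m) := by
    show cohFun (-a) n * cohFun (-b) m = (-1 : ℂ) ^ (n + m) * (cohFun a n * cohFun b m)
    rw [cohFun_neg, cohFun_neg, pow_add]
    ring
  have := hPev (tmul (coh a) (coh b)) n m
  simp only [lp.coeFn_smul, lp.coeFn_add, Pi.smul_apply, Pi.add_apply, smul_eq_mul]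
  rw [this, h1]
  by_cases h : Even (n + m)
  · rw [if_pos h, h.neg_one_pow]; ring
  · rw [if_neg h, Odd.neg_one_pow (Nat.not_even_iff_odd.mp h)]; ring

/-- action of the displaced even-parity projection on superpositions of
`coh α ⊠ coh 0` and `coh 0 ⊠ coh β`. -/
theorem displaced_even_parity_action (α β : ℂ)
    (𝔻 : lp (fun _ : ℕ × ℕ => ℂ) 2 ≃ₗᵢ[ℂ] lp (fun _ : ℕ × ℕ => ℂ) 2)
    (h𝔻 : IsTwoModeDisplacement 𝔻 (-α / 2) (-β / 2))
    (Pev : lp (fun _ : ℕ × ℕ => ℂ) 2 →L[ℂ] lp (fun _ : ℕ × ℕ => ℂ) 2)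
    (hPev : ∀ (φ : lp (fun _ : ℕ × ℕ => ℂ) 2) (n m : ℕ),
      (Pev φ) (n, m) = if Even (n + m) then φ (n, m) else 0)
    (B C : ℂ) :
    𝔻.symm (Pev (𝔻 (B • tmul (coh α) (coh 0) + C • tmul (coh 0) (coh β))))
      = ((B + C) / 2) • (tmul (coh α) (coh 0) + tmul (coh 0) (coh β)) := by
  have D1 : 𝔻 (tmul (coh α) (coh 0)) = tmul (coh (α/2)) (coh (-β/2)) := by
    have h := h𝔻 α 0
    rw [show -α/2 + α = α/2 from by ring, show -β/2 + (0:ℂ) = -β/2 from by ring] at h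
    have e0 : ((-α/2) * conj α - conj (-α/2) * α)/2
        + ((-β/2) * conj (0:ℂ) - conj (-β/2) * 0)/2 = 0 := by
      simp only [map_div₀, map_neg, map_zero, mul_zero, zero_mul, sub_zero]
      simp only [Complex.conj_ofNat]
      ring
    rw [e0, Complex.exp_zero, one_smul] at h
    exact h
  have D2 : 𝔻 (tmul (coh 0) (coh β)) = tmul (coh (-α/2)) (coh (β/2)) := by
    have h := h𝔻 0 β
    rw [show -α/2 + (0:ℂ) = -α/2 from by ring, show -β/2 + β = β/2 from by ring] at h
    have e0 : ((-α/2) * conj (0:ℂ) - conj (-α/2) * 0)/2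
        + ((-β/2) * conj β - conj (-β/2) * β)/2 = 0 := by
      simp only [map_div₀, map_neg, map_zero, mul_zero, zero_mul, sub_zero]
      simp only [Complex.conj_ofNat]
      ring
    rw [e0, Complex.exp_zero, one_smul] at h
    exact h
  have key : Pev (𝔻 (B • tmul (coh α) (coh 0) + C • tmul (coh 0) (coh β)))
      = ((B + C) / 2) • (𝔻 (tmul (coh α) (coh 0)) + 𝔻 (tmul (coh 0) (coh β))) := by
    rw [map_add, map_smul, map_smul, map_add, map_smul, map_smul, D1, D2,
      pev_tmul_coh Pev hPev, pev_tmul_coh Pev hPev]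
    rw [show -(α/2) = -α/2 from by ring, show -(-β/2) = β/2 from by ring,
      show -(-α/2) = α/2 from by ring, show -(β/2) = -β/2 from by ring]
    rw [smul_smul, smul_smul, smul_add, smul_add, smul_add]
    module
  rw [key, map_smul, map_add,
    LinearIsometryEquiv.symm_apply_apply, LinearIsometryEquiv.symm_apply_apply]
end

section
/- (Parity symmetry of the entangled coherent state) Let α, β ∈ ℂ and let 𝔻 be a two-mode displacement operator with parameters (−α/2, −β/2). Then 𝔻(coh α ⊠ coh 0 + coh 0 ⊠ coh β) = (1/2) • [ (coh(α/2) + coh(−α/2)) ⊠ (coh(β/2) + coh(−β/2)) − (coh(α/2) − coh(−α/2)) ⊠ (coh(β/2) − coh(−β/2)) ], i.e. the displaced entangled coherent state is a combination of even-cat⊗even-cat and odd-cat⊗odd-cat states. -/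
open scoped ComplexConjugate ENNReal

/-- parity symmetry of the entangled coherent state under the two-mode
displacement with parameters `(−α/2, −β/2)`. -/
theorem ecs_parity_symmetry (α β : ℂ)
    (𝔻 : lp (fun _ : ℕ × ℕ => ℂ) 2 ≃ₗᵢ[ℂ] lp (fun _ : ℕ × ℕ => ℂ) 2)
    (h𝔻 : IsTwoModeDisplacement 𝔻 (-α / 2) (-β / 2)) :
    𝔻 (tmul (coh α) (coh 0) + tmul (coh 0) (coh β))
      = ((1 : ℂ) / 2) •
        (tmul (coh (α / 2) + coh (-α / 2)) (coh (β / 2) + coh (-β / 2))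
          - tmul (coh (α / 2) - coh (-α / 2)) (coh (β / 2) - coh (-β / 2))) := by
  have h1 := h𝔻 α 0
  have h2 := h𝔻 0 β
  have e1 : ((-α / 2) * conj α - conj (-α / 2) * α) / 2
      + ((-β / 2) * conj (0:ℂ) - conj (-β / 2) * (0:ℂ)) / 2 = 0 := by
    simp only [map_neg, map_div₀, map_mul, map_ofNat, map_one, map_zero]
    ring
  have e2 : ((-α / 2) * conj (0:ℂ) - conj (-α / 2) * (0:ℂ)) / 2
      + ((-β / 2) * conj β - conj (-β / 2) * β) / 2 = 0 := by
    simp only [map_neg, map_div₀, map_mul, map_ofNat, map_one, map_zero]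
    ring
  rw [e1] at h1
  rw [e2] at h2
  have a1 : -α / 2 + α = α / 2 := by ring
  have a2 : -β / 2 + (0:ℂ) = -β / 2 := by ring
  have a3 : -α / 2 + (0:ℂ) = -α / 2 := by ring
  have a4 : -β / 2 + β = β / 2 := by ring
  rw [a1, a2, Complex.exp_zero, one_smul] at h1
  rw [a3, a4, Complex.exp_zero, one_smul] at h2
  rw [map_add, h1, h2]
  apply lp.ext
  funext q
  have hc : ∀ (ψ χ : lp (fun _ : ℕ => ℂ) 2), (tmul ψ χ : ∀ _ : ℕ × ℕ, ℂ) q = ψ q.1 * χ q.2 :=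
    fun _ _ => rfl
  simp only [lp.coeFn_add, lp.coeFn_sub, lp.coeFn_smul, Pi.add_apply, Pi.sub_apply,
    Pi.smul_apply, hc, smul_eq_mul]
  ring
end

section
/- (Lemma 1) Let J be a type, let α, β ∈ ℂ with α ≠ 0 and β ≠ 0, and let φ ∈ ℓ²(ℕ×ℕ×J, ℂ). Define the bounded operators Θ₁ = I ⊗ P₀ ⊗ I_J + P_α ⊗ I ⊗ I_J − P_α ⊗ P₀ ⊗ I_J and Θ₂ = I ⊗ P_β ⊗ I_J + P₀ ⊗ I ⊗ I_J − P₀ ⊗ P_β ⊗ I_J, acting on the first two indices and as the identity on the third. If Θ₁ φ = φ and Θ₂ φ = φ, then there exist ψ₁, ψ₂ ∈ ℓ²(J, ℂ) such that φ(n,m,j) = (coh α) n · (coh β) m · ψ₁ j + (coh 0) n · (coh 0) m · ψ₂ j for all n, m, j. -/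
open scoped ComplexConjugate ENNReal

lemma cohFun_ne_zero {α : ℂ} (hα : α ≠ 0) (n : ℕ) : cohFun α n ≠ 0 := by
  unfold cohFun
  apply mul_ne_zero
  · have h : (0:ℝ) < Real.exp (-‖α‖ ^ 2 / 2) / Real.sqrt (Nat.factorial n) := by positivity
    exact_mod_cast h.ne'
  · exact pow_ne_zero _ hα

lemma cohFun_zero_succ (m : ℕ) : cohFun 0 (m+1) = 0 := by
  simp [cohFun]

lemma cohFun_zero_zero : cohFun 0 0 = 1 := by
  simp [cohFun]

lemma slice_memℓp {J : Type*} (φ : lp (fun _ : ℕ × ℕ × J => ℂ) 2) (n m : ℕ) :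
    Memℓp (fun j : J => φ (n, m, j)) 2 := by
  apply memℓp_gen
  have hs : Summable (fun i : ℕ × ℕ × J => ‖φ i‖ ^ (2 : ℝ≥0∞).toReal) :=
    (lp.memℓp φ).summable (by norm_num)
  exact hs.comp_injective (fun j j' h => by simpa using h : Function.Injective fun j : J => (n, m, j))

/-- Lemma 1: a state of `ℓ²(ℕ×ℕ×J, ℂ)` fixed by the two measurement
operators `Θ₁` and `Θ₂` is a superposition `coh α ⊗ coh β ⊗ ψ₁ + coh 0 ⊗ coh 0 ⊗ ψ₂`. -/
theorem lemma1_two_mode_with_ancilla (J : Type*) (α β : ℂ) (hα : α ≠ 0) (hβ : β ≠ 0)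
    (φ : lp (fun _ : ℕ × ℕ × J => ℂ) 2)
    (Θ₁ Θ₂ : lp (fun _ : ℕ × ℕ × J => ℂ) 2 →L[ℂ] lp (fun _ : ℕ × ℕ × J => ℂ) 2)
    (hΘ₁ : ∀ (ψ : lp (fun _ : ℕ × ℕ × J => ℂ) 2) (n m : ℕ) (j : J),
      (Θ₁ ψ) (n, m, j)
        = cohFun 0 m * (∑' k : ℕ, conj (cohFun 0 k) * ψ (n, k, j))
        + cohFun α n * (∑' k : ℕ, conj (cohFun α k) * ψ (k, m, j))
        - cohFun α n * cohFun 0 m *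
            (∑' k : ℕ, ∑' l : ℕ, conj (cohFun α k) * conj (cohFun 0 l) * ψ (k, l, j)))
    (hΘ₂ : ∀ (ψ : lp (fun _ : ℕ × ℕ × J => ℂ) 2) (n m : ℕ) (j : J),
      (Θ₂ ψ) (n, m, j)
        = cohFun β m * (∑' k : ℕ, conj (cohFun β k) * ψ (n, k, j))
        + cohFun 0 n * (∑' k : ℕ, conj (cohFun 0 k) * ψ (k, m, j))
        - cohFun 0 n * cohFun β m *
            (∑' k : ℕ, ∑' l : ℕ, conj (cohFun 0 k) * conj (cohFun β l) * ψ (k, l, j)))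
    (h1 : Θ₁ φ = φ) (h2 : Θ₂ φ = φ) :
    ∃ ψ₁ ψ₂ : lp (fun _ : J => ℂ) 2, ∀ (n m : ℕ) (j : J),
      φ (n, m, j) = cohFun α n * cohFun β m * ψ₁ j + cohFun 0 n * cohFun 0 m * ψ₂ j := by

  have hcα1 : cohFun α 1 ≠ 0 := cohFun_ne_zero hα 1
  have hcβ1 : cohFun β 1 ≠ 0 := cohFun_ne_zero hβ 1
  have key1 : ∀ (n m : ℕ) (j : J), φ (n, m + 1, j)
      = cohFun α n * ∑' k : ℕ, conj (cohFun α k) * φ (k, m + 1, j) := by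
    intro n m j
    have h := hΘ₁ φ n (m + 1) j
    rw [h1, cohFun_zero_succ] at h
    simpa using h
  have key2 : ∀ (n m : ℕ) (j : J), φ (n + 1, m, j)
      = cohFun β m * ∑' k : ℕ, conj (cohFun β k) * φ (n + 1, k, j) := by
    intro n m j
    have h := hΘ₂ φ (n + 1) m j
    rw [h2, cohFun_zero_succ] at h
    simpa using h
  set c : ℂ := (cohFun α 1 * cohFun β 1)⁻¹ with hc
  refine ⟨⟨fun j => c * φ (1, 1, j), (slice_memℓp φ 1 1).const_mul c⟩,
    ⟨fun j => φ (0, 0, j) - cohFun α 0 * cohFun β 0 * (c * φ (1, 1, j)),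
      (slice_memℓp φ 0 0).sub
        (((slice_memℓp φ 1 1).const_mul c).const_mul (cohFun α 0 * cohFun β 0))⟩, ?_⟩
  intro n m j
  show φ (n, m, j) = cohFun α n * cohFun β m * (c * φ (1, 1, j))
      + cohFun 0 n * cohFun 0 m *
        (φ (0, 0, j) - cohFun α 0 * cohFun β 0 * (c * φ (1, 1, j)))
  rcases m with _ | m
  · rcases n with _ | n
    · rw [cohFun_zero_zero]
      ring
    · have e1 := key2 n 0 j
      have e2 := key2 n 1 j
      have e3 := key1 (n + 1) 0 j
      have e4 := key1 1 0 j
      norm_num at e3 e4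
      rw [cohFun_zero_zero, cohFun_zero_succ]
      rw [hc]
      field_simp
      linear_combination (cohFun α 1 * cohFun β 1) * e1 - (cohFun α 1 * cohFun β 0) * e2
        + (cohFun α 1 * cohFun β 0) * e3 - (cohFun α (n + 1) * cohFun β 0) * e4
  · have e1 := key1 n m j
    have e2 := key1 1 m j
    have e3 := key2 0 (m + 1) j
    have e4 := key2 0 1 j
    norm_num at e3 e4
    rw [cohFun_zero_succ]
    rw [hc]
    field_simp
    linear_combination (cohFun α 1 * cohFun β 1) * e1 - (cohFun β 1 * cohFun α n) * e2
      + (cohFun β 1 * cohFun α n) * e3 - (cohFun β (m + 1) * cohFun α n) * e4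
end

section
/- (Theorem 4) Let m ≥ 2, let α : Fin m → ℂ with α i ≠ 0 for every i, and let 𝔻 be an m-mode displacement operator with parameters (fun i => −(α i)/2). Let φ be a unit vector in the m-mode Hilbert space such that: (a) for every l with l+1 < m, φ is fixed by the operator (I ⊗ P₀ + P_{α l} ⊗ I − P_{α l} ⊗ P₀) acting on modes (l, l+1) and by the operator (I ⊗ P_{α(l+1)} + P₀ ⊗ I − P₀ ⊗ P_{α(l+1)}) acting on modes (l, l+1); and (b) (𝔻 φ) k = 0 for every k : Fin m → ℕ with Σ_i k i even. Then there exists c ∈ ℂ with |c| = 1 such that φ = c • ψ'^{GHZ-m}, where ψ'^{GHZ-m} = (2(1 − exp(−(Σ_i |α i|²)/2)))^{−1/2} • (Coh α − Coh 0). -/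
open scoped ComplexConjugate ENNReal

/-!
Where mode `l + 1` is excited, the vacuum projector `P₀` on it vanishes, so the first local test
reads `φ = (P_{α l} ⊗ I) φ`: as a function of the Fock index of mode `l`, `φ` is proportional to
`coh (α l)`; symmetrically for the second test. Hence the ratio `φ k / Coh α k` does not change
when one changes the index of a mode next to an excited one, and since the chain of modes is
connected, this ratio is a constant `a` on all `k ≠ 0`. So `φ = a • Coh α + b • Coh 0`. The
displacement by `-α/2` sends these two states to `Coh (α/2)` and `Coh (-α/2)`, which have the
same vacuum amplitude, so the parity test at `k = 0` forces `b = -a`; normalisation fixes `‖a‖`.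
-/

open Finset Function

theorem SimpleGraph.Preconnected.exists_adj_mem_not_mem {V : Type*} {G : SimpleGraph V}
    (hG : G.Preconnected) {S : Set V} {u v : V} (hu : u ∈ S) (hv : v ∉ S) :
    ∃ x y, G.Adj x y ∧ x ∈ S ∧ y ∉ S := by
  obtain ⟨d, -, hd⟩ := (hG u v).some.exists_boundary_dart S hu hv
  exact ⟨_, _, d.adj, hd⟩

theorem SimpleGraph.Preconnected.exists_adj_ne_one_ne_zero {ι : Type*} [Nontrivial ι]
    {G : SimpleGraph ι} (hG : G.Preconnected) {k : ι → ℕ} (h0 : k ≠ 0) (h1 : k ≠ 1) :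
    ∃ i j, G.Adj i j ∧ k i ≠ 1 ∧ k j ≠ 0 := by
  obtain ⟨j, hj⟩ := Function.ne_iff.1 h0
  by_cases hz : ∃ i, k i = 0
  · obtain ⟨i, hi⟩ := hz
    obtain ⟨x, y, hxy, hx, hy⟩ :=
      hG.exists_adj_mem_not_mem (S := {x | k x ≠ 0}) hj (by simpa using hi)
    refine ⟨y, x, hxy.symm, ?_, hx⟩
    simp_all
  · push Not at hz
    obtain ⟨i, hi⟩ := Function.ne_iff.1 h1
    obtain ⟨i', hi'⟩ := exists_ne i
    obtain ⟨x, y, hxy, rfl, -⟩ :=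
      hG.exists_adj_mem_not_mem (S := {i}) rfl (Set.mem_singleton_iff.not.2 hi')
    exact ⟨x, y, hxy, hi, hz y⟩

section ProportionalSlices

variable {ι K : Type*} [Fintype ι] [DecidableEq ι] [Field K]

theorem div_prod_update_eq_div_prod {f : ι → ℕ → K} (hf : ∀ i n, f i n ≠ 0)
    {ψ : (ι → ℕ) → K} {k : ι → ℕ} {i : ι} {c : K}
    (hc : ∀ n, ψ (update k i n) = f i n * c) (n : ℕ) :
    ψ (update k i n) / ∏ j, f j (update k i n j) = ψ k / ∏ j, f j (k j) := by
  have key : ∀ n, ψ (update k i n) / ∏ j, f j (update k i n j)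
      = c / ∏ j ∈ {i}ᶜ, f j (k j) := by
    intro n
    rw [hc, Fintype.prod_eq_mul_prod_compl i, update_self, mul_div_mul_left _ _ (hf i n)]
    congr 1
    exact prod_congr rfl fun j hj => by rw [update_of_ne (by simpa using hj)]
  simpa using (key n).trans (key (k i)).symm

theorem SimpleGraph.Preconnected.exists_forall_ne_zero_eq_mul_prod [Nontrivial ι]
    {G : SimpleGraph ι} (hG : G.Preconnected) {f : ι → ℕ → K} (hf : ∀ i n, f i n ≠ 0)
    {ψ : (ι → ℕ) → K}
    (hψ : ∀ i j k, G.Adj i j → k j ≠ 0 → ∃ c, ∀ n, ψ (update k i n) = f i n * c) :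
    ∃ a, ∀ k ≠ 0, ψ k = a * ∏ i, f i (k i) := by
  set r : (ι → ℕ) → K := fun k => ψ k / ∏ i, f i (k i) with hr
  suffices h : ∀ k ≠ 0, r k = r 1 by
    refine ⟨r 1, fun k hk => ?_⟩
    rw [← h k hk, hr, div_mul_cancel₀ _ (prod_ne_zero_iff.2 fun i _ => hf i _)]
  -- Induction on the number of indices `≠ 1`: reset one next to a nonzero index to `1`.
  intro k
  induction hN : #{i | k i ≠ 1} using Nat.strong_induction_on generalizing k with
  | _ N ih =>
  intro hk0
  by_cases hk1 : k = 1
  · rw [hk1]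
  obtain ⟨i, j, hij, hi, hj⟩ := hG.exists_adj_ne_one_ne_zero hk0 hk1
  obtain ⟨c, hc⟩ := hψ i j k hij hj
  change ψ k / ∏ i, f i (k i) = r 1
  rw [← div_prod_update_eq_div_prod hf hc 1]
  refine ih _ ?_ (update k i 1) rfl fun h => by simpa using congr_fun h i
  rw [← hN]
  refine card_lt_card ((ssubset_iff_of_subset fun x => ?_).2 ⟨i, by simpa using hi, by simp⟩)
  rcases eq_or_ne x i with rfl | hx <;> simp [update_of_ne, *]

end ProportionalSlices

theorem hasSum_pi_prod_of_nonneg {m : ℕ} {β : Type*} {f : Fin m → β → ℝ} {a : Fin m → ℝ}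
    (hf : ∀ i, HasSum (f i) (a i)) (hf₀ : ∀ i b, 0 ≤ f i b) :
    HasSum (fun k : Fin m → β => ∏ i, f i (k i)) (∏ i, a i) := by
  induction m with
  | zero => simp
  | succ m ih =>
    have htail : HasSum (fun k : Fin m → β => ∏ i : Fin m, f i.succ (k i))
        (∏ i : Fin m, a i.succ) :=
      ih (fun i => hf i.succ) (fun i => hf₀ i.succ)
    have htail₀ : (0 : (Fin m → β) → ℝ) ≤ fun k => ∏ i : Fin m, f i.succ (k i) :=
      fun k => prod_nonneg fun i _ => hf₀ i.succ _
    have hs := (hf 0).summable.mul_of_nonneg htail.summable (hf₀ 0) htail₀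
    have hmul := (hf 0).mul htail hs
    rw [Fin.prod_univ_succ, ← (Fin.consEquiv fun _ => β).hasSum_iff]
    simpa [Fin.consEquiv, Function.comp_def, Fin.prod_univ_succ] using hmul

theorem cohFun_ne_zero_s19 {β : ℂ} (hβ : β ≠ 0) (n : ℕ) : cohFun β n ≠ 0 :=
  mul_ne_zero (Complex.ofReal_ne_zero.2 (by have := n.factorial_pos; positivity))
    (pow_ne_zero _ hβ)

theorem cohFun_zero_of_ne_zero {n : ℕ} (hn : n ≠ 0) : cohFun 0 n = 0 := by
  simp [cohFun, hn]

theorem cohFun_apply_zero (β : ℂ) : cohFun β 0 = Real.exp (-‖β‖ ^ 2 / 2) := by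
  simp [cohFun]

theorem norm_sq_cohFun (β : ℂ) (n : ℕ) :
    ‖cohFun β n‖ ^ 2 = Real.exp (-‖β‖ ^ 2) * (‖β‖ ^ 2) ^ n / n.factorial := by
  have hexp : Real.exp (-‖β‖ ^ 2 / 2) ^ 2 = Real.exp (-‖β‖ ^ 2) := by
    rw [← Real.exp_nat_mul]; ring_nf
  simp only [cohFun, norm_mul, norm_pow, Complex.norm_real, Real.norm_eq_abs, mul_pow, div_pow,
    sq_abs, Real.sq_sqrt (Nat.cast_nonneg _), hexp]
  ring

/-- The photon-number distribution of a coherent state is Poisson with rate `‖β‖ ^ 2`. -/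
theorem hasSum_norm_sq_cohFun (β : ℂ) : HasSum (fun n => ‖cohFun β n‖ ^ 2) 1 := by
  convert ProbabilityTheory.hasSum_one_poissonMeasure (‖β‖₊ ^ 2) using 2 with n
  simp [norm_sq_cohFun]

variable {m : ℕ}

theorem Coh_apply (γ : Fin m → ℂ) (k : Fin m → ℕ) : Coh γ k = ∏ i, cohFun (γ i) (k i) := rfl

theorem Coh_apply_zero (γ : Fin m → ℂ) :
    Coh γ 0 = Real.exp (-(∑ i, ‖γ i‖ ^ 2) / 2) := by
  simp only [Coh_apply, Pi.zero_apply, cohFun_apply_zero, ← Complex.ofReal_prod, ← Real.exp_sum,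
    ← sum_div, ← sum_neg_distrib]

theorem Coh_zero_apply_of_ne_zero {k : Fin m → ℕ} (hk : k ≠ 0) : Coh (0 : Fin m → ℂ) k = 0 := by
  obtain ⟨i, hi⟩ := Function.ne_iff.1 hk
  exact prod_eq_zero (mem_univ i) (cohFun_zero_of_ne_zero hi)

theorem Coh_zero_apply_zero : Coh (0 : Fin m → ℂ) 0 = 1 := by
  simp [Coh_apply_zero]

theorem norm_Coh (γ : Fin m → ℂ) : ‖Coh γ‖ = 1 := by
  have h := lp.hasSum_norm (by norm_num) (Coh γ)
  simp only [ENNReal.toReal_ofNat, Real.rpow_two, Coh_apply, norm_prod, ← prod_pow] at h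
  have h1 := (hasSum_pi_prod_of_nonneg (fun i => hasSum_norm_sq_cohFun (γ i))
    fun _ _ => by positivity).unique h
  rw [prod_const_one] at h1
  exact (pow_eq_one_iff_of_nonneg (norm_nonneg _) two_ne_zero).1 h1.symm

theorem inner_Coh_Coh_zero (γ : Fin m → ℂ) :
    inner ℂ (Coh γ) (Coh 0) = Real.exp (-(∑ i, ‖γ i‖ ^ 2) / 2) := by
  rw [lp.inner_eq_tsum, tsum_eq_single 0 fun k hk => by simp [Coh_zero_apply_of_ne_zero hk]]
  rw [Coh_zero_apply_zero, Coh_apply_zero, RCLike.inner_apply', Complex.conj_ofReal, mul_one]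

theorem norm_Coh_sub_Coh_zero (γ : Fin m → ℂ) :
    ‖Coh γ - Coh 0‖ = √(2 * (1 - Real.exp (-(∑ i, ‖γ i‖ ^ 2) / 2))) := by
  rw [← Real.sqrt_sq (norm_nonneg (Coh γ - Coh 0)), @norm_sub_sq ℂ, norm_Coh, norm_Coh,
    inner_Coh_Coh_zero, RCLike.re_to_complex, Complex.ofReal_re]
  ring_nf

theorem eq_smul_Coh_add_smul_Coh_zero {φ : lp (fun _ : Fin m → ℕ => ℂ) 2} {γ : Fin m → ℂ} {a : ℂ}
    (h : ∀ k ≠ 0, φ k = a * Coh γ k) : φ = a • Coh γ + (φ 0 - a * Coh γ 0) • Coh 0 := by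
  ext k
  simp only [lp.coeFn_add, lp.coeFn_smul, Pi.add_apply, Pi.smul_apply, smul_eq_mul]
  by_cases hk : k = 0
  · rw [hk, Coh_zero_apply_zero]
    ring
  · rw [Coh_zero_apply_of_ne_zero hk, h k hk]
    ring

theorem IsDisplacement.apply_Coh
    {𝔻 : lp (fun _ : Fin m → ℕ => ℂ) 2 ≃ₗᵢ[ℂ] lp (fun _ : Fin m → ℕ => ℂ) 2} {γ : Fin m → ℂ}
    (h𝔻 : IsDisplacement 𝔻 γ) {β : Fin m → ℂ} (hβ : ∀ i, γ i * conj (β i) = conj (γ i) * β i) :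
    𝔻 (Coh β) = Coh (γ + β) := by
  rw [h𝔻 β, Finset.sum_eq_zero fun i _ => by rw [hβ i, sub_self, zero_div], Complex.exp_zero,
    one_smul]

theorem add_eq_zero_of_displacement_apply_zero_eq_zero {α : Fin m → ℂ}
    {𝔻 : lp (fun _ : Fin m → ℕ => ℂ) 2 ≃ₗᵢ[ℂ] lp (fun _ : Fin m → ℕ => ℂ) 2}
    (h𝔻 : IsDisplacement 𝔻 (fun i => -(α i) / 2)) {a b : ℂ}
    (h : 𝔻 (a • Coh α + b • Coh 0) 0 = 0) : a + b = 0 := by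
  -- Written as `Coh (-γ)` and `Coh γ`, the two images visibly have the same vacuum amplitude.
  have hα : 𝔻 (Coh α) = Coh (fun i => -(-(α i) / 2)) := by
    rw [h𝔻.apply_Coh fun i => by rw [map_div₀, map_neg, map_ofNat]; ring]
    congr 1
    ext i
    rw [Pi.add_apply]
    ring
  have h0 : 𝔻 (Coh 0) = Coh (fun i => -(α i) / 2) := by
    rw [h𝔻.apply_Coh fun i => by simp, add_zero]
  rw [map_add, map_smul, map_smul, hα, h0] at h
  simp only [lp.coeFn_add, lp.coeFn_smul, Pi.add_apply, Pi.smul_apply, smul_eq_mul,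
    Coh_apply_zero, norm_neg, ← add_mul] at h
  exact (mul_eq_zero.1 h).resolve_right (Complex.ofReal_ne_zero.2 (Real.exp_ne_zero _))

theorem exists_norm_eq_one_eq_smul_inv_norm_smul {𝕜 E : Type*} [RCLike 𝕜] [NormedAddCommGroup E]
    [NormedSpace 𝕜 E] {φ v : E} {a : 𝕜} (hφ : φ = a • v) (h1 : ‖φ‖ = 1) :
    ∃ c : 𝕜, ‖c‖ = 1 ∧ φ = c • ((‖v‖ : 𝕜)⁻¹ • v) := by
  have hav : ‖a‖ * ‖v‖ = 1 := by rw [← norm_smul, ← hφ, h1]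
  have hv : (‖v‖ : 𝕜) ≠ 0 := by
    rw [RCLike.ofReal_ne_zero]; rintro h; simp [h] at hav
  refine ⟨a * ‖v‖, by rw [norm_mul, RCLike.norm_ofReal, abs_norm, hav], ?_⟩
  rw [smul_smul, mul_assoc, mul_inv_cancel₀ hv, mul_one, hφ]

/-- Theorem 4: a unit vector passing all the local two-mode settings and
the displaced odd-parity measurement equals the m-mode GHZ-like coherent state
`ψ'^{GHZ-m}` up to a phase. -/
theorem ghz_minus_verification (m : ℕ) (hm : 2 ≤ m) (α : Fin m → ℂ) (hα : ∀ i, α i ≠ 0)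
    (𝔻 : lp (fun _ : Fin m → ℕ => ℂ) 2 ≃ₗᵢ[ℂ] lp (fun _ : Fin m → ℕ => ℂ) 2)
    (h𝔻 : IsDisplacement 𝔻 (fun i => -(α i) / 2))
    (φ : lp (fun _ : Fin m → ℕ => ℂ) 2) (hnorm : ‖φ‖ = 1)
    (ha₁ : ∀ (l : ℕ) (hl : l + 1 < m) (k : Fin m → ℕ),
      φ k
        = cohFun 0 (k ⟨l + 1, hl⟩) *
            (∑' j : ℕ, conj (cohFun 0 j) * φ (Function.update k ⟨l + 1, hl⟩ j))
        + cohFun (α ⟨l, Nat.lt_of_succ_lt hl⟩) (k ⟨l, Nat.lt_of_succ_lt hl⟩) *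
            (∑' j : ℕ, conj (cohFun (α ⟨l, Nat.lt_of_succ_lt hl⟩) j) *
              φ (Function.update k ⟨l, Nat.lt_of_succ_lt hl⟩ j))
        - cohFun (α ⟨l, Nat.lt_of_succ_lt hl⟩) (k ⟨l, Nat.lt_of_succ_lt hl⟩) *
            cohFun 0 (k ⟨l + 1, hl⟩) *
            (∑' j : ℕ, ∑' j' : ℕ,
              conj (cohFun (α ⟨l, Nat.lt_of_succ_lt hl⟩) j) * conj (cohFun 0 j') *
                φ (Function.update (Function.update k ⟨l, Nat.lt_of_succ_lt hl⟩ j)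
                    ⟨l + 1, hl⟩ j')))
    (ha₂ : ∀ (l : ℕ) (hl : l + 1 < m) (k : Fin m → ℕ),
      φ k
        = cohFun (α ⟨l + 1, hl⟩) (k ⟨l + 1, hl⟩) *
            (∑' j : ℕ, conj (cohFun (α ⟨l + 1, hl⟩) j) * φ (Function.update k ⟨l + 1, hl⟩ j))
        + cohFun 0 (k ⟨l, Nat.lt_of_succ_lt hl⟩) *
            (∑' j : ℕ, conj (cohFun 0 j) * φ (Function.update k ⟨l, Nat.lt_of_succ_lt hl⟩ j))
        - cohFun 0 (k ⟨l, Nat.lt_of_succ_lt hl⟩) *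
            cohFun (α ⟨l + 1, hl⟩) (k ⟨l + 1, hl⟩) *
            (∑' j : ℕ, ∑' j' : ℕ,
              conj (cohFun 0 j) * conj (cohFun (α ⟨l + 1, hl⟩) j') *
                φ (Function.update (Function.update k ⟨l, Nat.lt_of_succ_lt hl⟩ j)
                    ⟨l + 1, hl⟩ j')))
    (hb : ∀ k : Fin m → ℕ, Even (∑ i, k i) → (𝔻 φ) k = 0) :
    ∃ c : ℂ, ‖c‖ = 1 ∧
      φ = c • (((Real.sqrt (2 * (1 - Real.exp (-(∑ i, ‖α i‖ ^ 2) / 2))))⁻¹ : ℂ) •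
        (Coh α - Coh (0 : Fin m → ℂ))) := by
  have : Nontrivial (Fin m) := Fin.nontrivial_iff_two_le.2 hm
  have hslice : ∀ i j k, (SimpleGraph.pathGraph m).Adj i j → k j ≠ 0 →
      ∃ c, ∀ n, φ (update k i n) = cohFun (α i) n * c := by
    rintro ⟨i, hi⟩ ⟨j, hj⟩ k hij hk
    rcases SimpleGraph.pathGraph_adj.1 hij with rfl | rfl
    · refine ⟨∑' n, conj (cohFun (α ⟨i, hi⟩) n) * φ (update k ⟨i, hi⟩ n), fun n => ?_⟩
      simpa [cohFun_zero_of_ne_zero hk] using ha₁ i hj (update k ⟨i, hi⟩ n)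
    · refine ⟨∑' n, conj (cohFun (α ⟨j + 1, hi⟩) n) * φ (update k ⟨j + 1, hi⟩ n), fun n => ?_⟩
      simpa [cohFun_zero_of_ne_zero hk] using ha₂ j hi (update k ⟨j + 1, hi⟩ n)
  obtain ⟨a, ha⟩ := (SimpleGraph.pathGraph_preconnected m).exists_forall_ne_zero_eq_mul_prod
    (fun i => cohFun_ne_zero_s19 (hα i)) hslice
  have hrep := eq_smul_Coh_add_smul_Coh_zero ha
  have hab := add_eq_zero_of_displacement_apply_zero_eq_zero h𝔻 (hrep ▸ hb 0 (by simp))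
  rw [← norm_Coh_sub_Coh_zero]
  refine exists_norm_eq_one_eq_smul_inv_norm_smul (a := a) ?_ hnorm
  rw [hrep, eq_neg_of_add_eq_zero_right hab, neg_smul, ← sub_eq_add_neg, smul_sub]
end
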